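/- Let M be a matroid, let B₁, …, B_k (k ≥ 2) be pairwise disjoint bases of M, and let A₁ ⊆ B₁. Define C₁ = B_k ∪ (B₁ \ A₁), C₂ = A₁ ∪ B₂, and C_i = B_{i−1} ∪ B_i for i = 3, …, k. Then there exist sets D₁, …, D_k such that each D_i is an independent set of M contained in C_i, and D₁ ∪ ⋯ ∪ D_k = B₁ ∪ ⋯ ∪ B_k. -/

import Mathlib

/-!
Exchanging `A₁` symmetrically between `B 0` and `B 1` gives `T₁ ⊆ B 1` with `(B 0 \ A₁) ∪ T₁` and
`A₁ ∪ (B 1 \ T₁)` bases; exchanging `T₁` between `(B 0 \ A₁) ∪ T₁` and `B 2` gives `T₂`, and so on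
around the cycle. With `T 0 = A₁`, the sets `D i = T (i - 1) ∪ (B i \ T i)` are then bases inside
`C i`, and they cover `⋃ i, B i` because `T i ⊆ B i`.

Symmetric set exchange for disjoint bases is the matroid union theorem for `M ／ (B₁ \ X)` and
`M ／ X` on `B₂`, whose rank condition is submodularity. The union theorem is proved by induction
on the set `S` to be split: a proper tight subset splits the problem in two, and if there is none,
an element of `S` spanned by the rest of `S ∪ X` can be committed to the `W` side.
-/

open Set Function

namespace Set

lemma iUnion_sub_union_sdiff {α ι : Type*} [AddGroup ι] {B T : ι → Set α}
    (hT : ∀ i, T i ⊆ B i) (s : ι) : ⋃ i, (T (i - s) ∪ (B i \ T i)) = ⋃ i, B i := by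
  rw [iUnion_union_distrib, show ⋃ i, T (i - s) = ⋃ i, T i from
    (Equiv.subRight s).surjective.iUnion_comp T, ← iUnion_union_distrib]
  exact iUnion_congr fun i ↦ union_sdiff_cancel (hT i)

end Set

namespace Matroid

variable {α : Type*} {M : Matroid α} {A I S W X Y : Set α} {e : α}

/-- The `ℕ`-valued rank; it is `0` on sets of infinite rank. -/
noncomputable def rk (M : Matroid α) (X : Set α) : ℕ := (M.eRk X).toNat

lemma IsBasis'.rk_union_eq (hI : M.IsBasis' I X) (Y : Set α) : M.rk (I ∪ Y) = M.rk (X ∪ Y) := by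
  rw [rk, rk, hI.eRk_eq_eRk_union]

/-- The rank condition of the matroid union theorem for `M ／ W` and `M ／ X` on `S`. -/
structure PartitionCond (M : Matroid α) (W X S : Set α) : Prop where
  finite : S.Finite
  indep_left : M.Indep W
  indep_right : M.Indep X
  disjoint_left : Disjoint S W
  disjoint_right : Disjoint S X
  ncard_add_le_rk_add_rk : ∀ A ⊆ S, A.ncard + W.ncard + X.ncard ≤ M.rk (A ∪ W) + M.rk (A ∪ X)

lemma PartitionCond.mono (h : M.PartitionCond W X S) {T : Set α} (hTS : T ⊆ S) :
    M.PartitionCond W X T where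
  finite := h.finite.subset hTS
  indep_left := h.indep_left
  indep_right := h.indep_right
  disjoint_left := h.disjoint_left.mono_left hTS
  disjoint_right := h.disjoint_right.mono_left hTS
  ncard_add_le_rk_add_rk A hAT := h.ncard_add_le_rk_add_rk A (hAT.trans hTS)

section RankFinite

variable [M.RankFinite]

lemma cast_rk (M : Matroid α) [M.RankFinite] (X : Set α) : (M.rk X : ℕ∞) = M.eRk X :=
  ENat.natCast_toNat (eRk_ne_top_iff.2 (M.isRkFinite_set X))

lemma IsBasis'.rk_eq_ncard (hI : M.IsBasis' I X) : M.rk X = I.ncard := by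
  rw [← Nat.cast_inj (R := ℕ∞), cast_rk, ← hI.encard_eq_eRk, hI.indep.finite.cast_ncard_eq]

lemma Indep.rk_eq_ncard (hI : M.Indep I) : M.rk I = I.ncard :=
  hI.isBasis_self.isBasis'.rk_eq_ncard

lemma Indep.ncard_le_rk_of_subset (hI : M.Indep I) (hIX : I ⊆ X) : I.ncard ≤ M.rk X := by
  rw [← Nat.cast_le (α := ℕ∞), cast_rk, hI.finite.cast_ncard_eq]
  exact hI.encard_le_eRk_of_subset hIX

lemma rk_mono (M : Matroid α) [M.RankFinite] : Monotone M.rk := fun X Y hXY ↦ by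
  rw [← Nat.cast_le (α := ℕ∞), cast_rk, cast_rk]
  exact M.eRk_mono hXY

lemma rk_insert_le_add_one (M : Matroid α) [M.RankFinite] (e : α) (X : Set α) :
    M.rk (insert e X) ≤ M.rk X + 1 := by
  rw [← Nat.cast_le (α := ℕ∞), Nat.cast_add, cast_rk, cast_rk, Nat.cast_one]
  exact M.eRk_insert_le_add_one e X

lemma rk_inter_add_rk_union_le (M : Matroid α) [M.RankFinite] (X Y : Set α) :
    M.rk (X ∩ Y) + M.rk (X ∪ Y) ≤ M.rk X + M.rk Y := by
  simp only [← Nat.cast_le (α := ℕ∞), Nat.cast_add, cast_rk]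
  exact M.eRk_inter_add_eRk_union_le X Y

lemma Indep.isBasis'_of_rk_le (hI : M.Indep I) (hIX : I ⊆ X) (h : M.rk X ≤ I.ncard) :
    M.IsBasis' I X := by
  refine hI.isBasis'_of_eRk_ge hI.finite hIX ?_
  rw [← cast_rk, ← cast_rk, hI.rk_eq_ncard]
  exact_mod_cast h

lemma Indep.isBase_of_rk_le (hI : M.Indep I) (h : M.rk M.E ≤ I.ncard) : M.IsBase I := by
  rw [← isBasis_ground_iff]
  exact (hI.isBasis'_of_rk_le hI.subset_ground h).isBasis

lemma indep_of_ncard_le_rk (hI : I.Finite) (h : I.ncard ≤ M.rk I) : M.Indep I := by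
  refine (M.isRkFinite_of_finite hI).indep_of_encard_le_eRk ?_
  rw [← hI.cast_ncard_eq, ← cast_rk]
  exact_mod_cast h

lemma Indep.exists_rk_sdiff_singleton_union_eq (hX : M.Indep X)
    (hSX : ¬ M.Indep (S ∪ X)) : ∃ e ∈ S, M.rk ((S \ {e}) ∪ X) = M.rk (S ∪ X) := by
  obtain ⟨J, hJ, hXJ⟩ := hX.subset_isBasis'_of_subset (subset_union_right (s := S))
  obtain ⟨e, heSX, heJ⟩ : ∃ e ∈ S ∪ X, e ∉ J :=
    not_subset.1 fun h ↦ hSX (hJ.subset.antisymm h ▸ hJ.indep)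
  have heS : e ∈ S := heSX.resolve_right fun he ↦ heJ (hXJ he)
  refine ⟨e, heS, (M.rk_mono (union_subset_union_left X sdiff_subset)).antisymm ?_⟩
  rw [hJ.rk_eq_ncard]
  refine hJ.indep.ncard_le_rk_of_subset fun x hx ↦ ?_
  obtain hxS | hxX := hJ.subset hx
  · exact Or.inl ⟨hxS, by rintro rfl; exact heJ hx⟩
  · exact Or.inr hxX

namespace PartitionCond

/-- Once a tight subset `A` is split, `W ∪ Y` and `X ∪ (A \ Y)` span `A ∪ W` and `A ∪ X`, so the
remaining elements see the same ranks as before. -/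
lemma sdiff_of_tight (h : M.PartitionCond W X S) (hAS : A ⊆ S)
    (htight : M.rk (A ∪ W) + M.rk (A ∪ X) ≤ A.ncard + W.ncard + X.ncard) (hYA : Y ⊆ A)
    (hWY : M.Indep (W ∪ Y)) (hXY : M.Indep (X ∪ (A \ Y))) :
    M.PartitionCond (W ∪ Y) (X ∪ (A \ Y)) (S \ A) := by
  have hAfin := h.finite.subset hAS
  have hWYA : W ∪ Y ⊆ A ∪ W := union_subset subset_union_right (hYA.trans subset_union_left)
  have hXYA : X ∪ (A \ Y) ⊆ A ∪ X :=
    union_subset subset_union_right (sdiff_subset.trans subset_union_left)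
  have hW : (W ∪ Y).ncard = W.ncard + Y.ncard :=
    ncard_union_eq (h.disjoint_left.mono_left (hYA.trans hAS)).symm h.indep_left.finite
      (hAfin.subset hYA)
  have hX : (X ∪ (A \ Y)).ncard = X.ncard + (A \ Y).ncard :=
    ncard_union_eq (h.disjoint_right.mono_left (sdiff_subset.trans hAS)).symm
      h.indep_right.finite (hAfin.subset sdiff_subset)
  have hA : (A \ Y).ncard + Y.ncard = A.ncard := ncard_sdiff_add_ncard_of_subset hYA hAfin
  have hWle := hWY.ncard_le_rk_of_subset hWYA
  have hXle := hXY.ncard_le_rk_of_subset hXYA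
  have hA_le := h.ncard_add_le_rk_add_rk A hAS
  have hWb : M.IsBasis' (W ∪ Y) (A ∪ W) := hWY.isBasis'_of_rk_le hWYA (by omega)
  have hXb : M.IsBasis' (X ∪ (A \ Y)) (A ∪ X) := hXY.isBasis'_of_rk_le hXYA (by omega)
  refine ⟨h.finite.subset sdiff_subset, hWY, hXY, ?_, ?_, fun A' hA' ↦ ?_⟩
  · exact disjoint_union_right.2 ⟨h.disjoint_left.mono_left sdiff_subset,
      disjoint_sdiff_left.mono_right hYA⟩
  · exact disjoint_union_right.2 ⟨h.disjoint_right.mono_left sdiff_subset,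
      disjoint_sdiff_left.mono_right sdiff_subset⟩
  have hA'A : (A' ∪ A).ncard = A'.ncard + A.ncard := ncard_union_eq
    (disjoint_sdiff_left.mono_left hA') (h.finite.subset (hA'.trans sdiff_subset)) hAfin
  have hrW : M.rk (A' ∪ (W ∪ Y)) = M.rk ((A' ∪ A) ∪ W) := by
    rw [union_comm, hWb.rk_union_eq, union_comm, union_assoc]
  have hrX : M.rk (A' ∪ (X ∪ (A \ Y))) = M.rk ((A' ∪ A) ∪ X) := by
    rw [union_comm, hXb.rk_union_eq, union_comm, union_assoc]
  have := h.ncard_add_le_rk_add_rk (A' ∪ A) (union_subset (hA'.trans sdiff_subset) hAS)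
  omega

lemma insert_sdiff_singleton (h : M.PartitionCond W X S)
    (hstrict : ∀ A ⊆ S, A.Nonempty → A ≠ S →
      A.ncard + W.ncard + X.ncard < M.rk (A ∪ W) + M.rk (A ∪ X))
    (heS : e ∈ S) (he : M.rk ((S \ {e}) ∪ X) = M.rk (S ∪ X)) :
    M.PartitionCond (insert e W) X (S \ {e}) := by
  have heW : e ∉ W := Set.disjoint_left.1 h.disjoint_left heS
  have hcard : (insert e W).ncard = W.ncard + 1 := ncard_insert_of_notMem heW h.indep_left.finite
  have key : ∀ A ⊆ S \ {e}, A.ncard + (W.ncard + 1) + X.ncard ≤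
      M.rk (A ∪ insert e W) + M.rk (A ∪ X) := by
    intro A hA
    have heA : e ∉ A := fun he ↦ (hA he).2 rfl
    have hAfin := h.finite.subset (hA.trans sdiff_subset)
    rw [union_insert, ← insert_union]
    have heA_card : (insert e A).ncard = A.ncard + 1 := ncard_insert_of_notMem heA hAfin
    obtain hAS | hAS := eq_or_ne (insert e A) S
    · have hAX : M.rk (A ∪ X) = M.rk (S ∪ X) := by
        rw [← hAS, insert_sdiff_of_mem _ (mem_singleton e), sdiff_singleton_eq_self heA] at he
        rwa [hAS] at he
      have := h.ncard_add_le_rk_add_rk S subset_rfl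
      rw [hAS] at heA_card ⊢
      omega
    · have := hstrict (insert e A) (insert_subset heS (hA.trans sdiff_subset))
        (insert_nonempty e A) hAS
      have := M.rk_insert_le_add_one e (A ∪ X)
      rw [← insert_union] at this
      omega
  have hWe : M.Indep (insert e W) := by
    refine indep_of_ncard_le_rk (h.indep_left.finite.insert e) ?_
    have := key ∅ (empty_subset _)
    rw [empty_union, empty_union, h.indep_right.rk_eq_ncard, ncard_empty] at this
    omega
  refine ⟨h.finite.subset sdiff_subset, hWe, h.indep_right, ?_,
    h.disjoint_right.mono_left sdiff_subset, fun A hA ↦ hcard ▸ key A hA⟩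
  rw [insert_eq]
  exact disjoint_union_right.2 ⟨disjoint_sdiff_left, h.disjoint_left.mono_left sdiff_subset⟩

theorem exists_split (h : M.PartitionCond W X S) :
    ∃ Y ⊆ S, M.Indep (W ∪ Y) ∧ M.Indep (X ∪ (S \ Y)) := by
  induction hn : S.ncard using Nat.strong_induction_on generalizing W X S with
  | _ n ih =>
  subst hn
  by_cases htight : ∃ A ⊆ S, A.Nonempty ∧ A ≠ S ∧
      M.rk (A ∪ W) + M.rk (A ∪ X) ≤ A.ncard + W.ncard + X.ncard
  · obtain ⟨A, hAS, hA, hAS', htA⟩ := htight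
    obtain ⟨Y₀, hY₀, hWY₀, hXY₀⟩ :=
      ih _ (ncard_lt_ncard (hAS.ssubset_of_ne hAS') h.finite) (h.mono hAS) rfl
    obtain ⟨Y₁, hY₁, hWY₁, hXY₁⟩ := ih _
      (ncard_lt_ncard (sdiff_ssubset_left_iff.2 (by rwa [inter_eq_right.2 hAS])) h.finite)
      (h.sdiff_of_tight hAS htA hY₀ hWY₀ hXY₀) rfl
    refine ⟨Y₀ ∪ Y₁, union_subset (hY₀.trans hAS) (hY₁.trans sdiff_subset),
      by rwa [← union_assoc], ?_⟩
    have hS : S \ (Y₀ ∪ Y₁) = (A \ Y₀) ∪ ((S \ A) \ Y₁) := by grind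
    rwa [hS, ← union_assoc]
  by_cases hSX : M.Indep (S ∪ X)
  · exact ⟨∅, empty_subset S, by simpa using h.indep_left, by simpa [union_comm] using hSX⟩
  push Not at htight
  obtain ⟨e, heS, he⟩ := h.indep_right.exists_rk_sdiff_singleton_union_eq hSX
  obtain ⟨Y, hY, hWY, hXY⟩ := ih _ (ncard_sdiff_singleton_lt_of_mem heS h.finite)
    (h.insert_sdiff_singleton htight heS he) rfl
  refine ⟨insert e Y, insert_subset heS (hY.trans sdiff_subset),
    by rwa [union_insert, ← insert_union], ?_⟩
  rwa [insert_eq, ← sdiff_sdiff]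

end PartitionCond

theorem IsBase.exists_symm_exchange {B₁ B₂ : Set α} (hB₁ : M.IsBase B₁) (hB₂ : M.IsBase B₂)
    (hB₁₂ : Disjoint B₁ B₂) (hXB₁ : X ⊆ B₁) :
    ∃ Y ⊆ B₂, M.IsBase ((B₁ \ X) ∪ Y) ∧ M.IsBase (X ∪ (B₂ \ Y)) := by
  have hB₁X : (B₁ \ X).ncard + X.ncard = B₁.ncard := ncard_sdiff_add_ncard_of_subset hXB₁ hB₁.finite
  have hcond : M.PartitionCond (B₁ \ X) X B₂ := by
    refine ⟨hB₂.finite, hB₁.indep.subset sdiff_subset, hB₁.indep.subset hXB₁,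
      hB₁₂.symm.mono_right sdiff_subset, hB₁₂.symm.mono_right hXB₁, fun A hA ↦ ?_⟩
    have hsub := M.rk_inter_add_rk_union_le (A ∪ (B₁ \ X)) (A ∪ X)
    rw [← union_inter_distrib_left, sdiff_inter_self, union_empty, ← union_union_distrib_left,
      sdiff_union_of_subset hXB₁] at hsub
    have := (hB₂.indep.subset hA).rk_eq_ncard
    have := hB₁.indep.ncard_le_rk_of_subset (subset_union_right (s := A))
    omega
  obtain ⟨Y, hYB₂, hWY, hXY⟩ := hcond.exists_split
  have hY : Y.ncard + (B₂ \ Y).ncard = B₂.ncard := by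
    rw [add_comm, ncard_sdiff_add_ncard_of_subset hYB₂ hB₂.finite]
  have hWYcard : ((B₁ \ X) ∪ Y).ncard = (B₁ \ X).ncard + Y.ncard :=
    ncard_union_eq ((hB₁₂.mono sdiff_subset hYB₂)) (hB₁.finite.subset sdiff_subset)
      (hB₂.finite.subset hYB₂)
  have hXYcard : (X ∪ (B₂ \ Y)).ncard = X.ncard + (B₂ \ Y).ncard :=
    ncard_union_eq ((hB₁₂.mono hXB₁ sdiff_subset)) (hB₁.finite.subset hXB₁)
      (hB₂.finite.subset sdiff_subset)
  have hrk₁ := hB₁.isBasis_ground.isBasis'.rk_eq_ncard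
  have := hB₁.ncard_eq_ncard_of_isBase hB₂
  have := hWY.ncard_le_rk_of_subset hWY.subset_ground
  have := hXY.ncard_le_rk_of_subset hXY.subset_ground
  exact ⟨Y, hYB₂, hWY.isBase_of_rk_le (by omega), hXY.isBase_of_rk_le (by omega)⟩

theorem exists_exchange_chain {F T₀ : Set α} {B : ℕ → Set α} (n : ℕ)
    (hFT₀ : M.IsBase (F ∪ T₀)) (hFT₀' : Disjoint F T₀) (hT₀ : T₀ ⊆ B 0)
    (hB : ∀ i < n, M.IsBase (B (i + 1))) (hF : ∀ i < n, Disjoint F (B (i + 1)))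
    (hBB : ∀ i < n, Disjoint (B i) (B (i + 1))) :
    ∃ T : ℕ → Set α, T 0 = T₀ ∧ (∀ i ≤ n, T i ⊆ B i) ∧
      (∀ i < n, M.IsBase (T i ∪ (B (i + 1) \ T (i + 1)))) ∧ M.IsBase (F ∪ T n) := by
  induction n with
  | zero =>
    exact ⟨fun _ ↦ T₀, rfl, fun i hi ↦ by rwa [Nat.le_zero.1 hi], by simp, hFT₀⟩
  | succ n ih =>
    obtain ⟨T, hT0, hTB, hstep, hFT⟩ := ih (fun i hi ↦ hB i (by omega))
      (fun i hi ↦ hF i (by omega)) (fun i hi ↦ hBB i (by omega))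
    have hFTn : Disjoint F (T n) := by
      rcases n with _ | n
      · rwa [hT0]
      · exact (hF n (by omega)).mono_right (hTB _ le_rfl)
    obtain ⟨Y, hY, hFY, hTY⟩ := hFT.exists_symm_exchange (hB n (by omega))
      (disjoint_union_left.2 ⟨hF n (by omega), (hBB n (by omega)).mono_left (hTB n le_rfl)⟩)
      subset_union_right
    rw [union_sdiff_cancel_right hFTn.inter_eq.subset] at hFY
    refine ⟨Function.update T (n + 1) Y, by simp [hT0], fun i hi ↦ ?_, fun i hi ↦ ?_, by simpa⟩
    · obtain rfl | hi := eq_or_ne i (n + 1)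
      · simpa using hY
      · simpa [hi] using hTB i (by omega)
    · obtain rfl | hi := eq_or_ne i n
      · simpa using hTY
      · simpa [hi, show i ≠ n + 1 by omega] using hstep i (by omega)

open Fin.NatCast in
theorem exists_cyclic_exchange {k : ℕ} [NeZero k] {B : Fin k → Set α} {A : Set α}
    (hB : ∀ i, M.IsBase (B i)) (hdisj : Pairwise (Disjoint on B)) (hA : A ⊆ B 0) :
    ∃ T : Fin k → Set α, T 0 = A ∧ (∀ i, T i ⊆ B i) ∧ ∀ i, M.IsBase (T (i - 1) ∪ (B i \ T i)) := by
  obtain ⟨m, rfl⟩ : ∃ m, k = m + 1 := Nat.exists_eq_succ_of_ne_zero (NeZero.ne k)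
  have hne {i j : ℕ} (hi : i < m + 1) (hj : j < m + 1) (hij : i ≠ j) : (i : Fin (m + 1)) ≠ j := by
    simpa [Fin.ext_iff, Nat.mod_eq_of_lt hi, Nat.mod_eq_of_lt hj] using hij
  obtain ⟨T, hT0, hTB, hstep, hlast⟩ := exists_exchange_chain (M := M) (F := B 0 \ A)
    (B := fun n ↦ B n) m (by rw [sdiff_union_of_subset hA]; exact hB 0) disjoint_sdiff_left
    (by simpa using hA) (fun i _ ↦ hB _)
    (fun i hi ↦ (hdisj (hne (Nat.zero_lt_succ m) (by omega) (by omega))).mono_left sdiff_subset)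
    (fun i hi ↦ hdisj (hne (by omega) (by omega) (by omega)))
  refine ⟨fun i ↦ T i, hT0, fun i ↦ by simpa using hTB i (by omega), fun i ↦ ?_⟩
  dsimp only
  rw [Fin.coe_sub_one]
  split_ifs with hi
  · subst hi
    simpa [hT0, union_comm] using hlast
  · obtain ⟨j, hj⟩ : ∃ j, (i : ℕ) = j + 1 :=
      ⟨i - 1, by have := Fin.val_ne_zero_iff.2 hi; omega⟩
    have hij : ((j + 1 : ℕ) : Fin (m + 1)) = i := by rw [← hj, Fin.cast_val_eq_self]
    rw [hj, Nat.add_sub_cancel, ← hij]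
    exact hstep j (by omega)

end RankFinite

end Matroid

theorem exists_independent_partition_general {α : Type*} {k : ℕ} [NeZero k]
    (M : Matroid α) (hM : M.Finite)
    (B : Fin k → Set α) (hB : ∀ i, M.IsBase (B i))
    (hdisj : ∀ i j : Fin k, i ≠ j → Disjoint (B i) (B j))
    (A₁ : Set α) (hA₁ : A₁ ⊆ B 0)
    (C : Fin k → Set α)
    (hC0 : C 0 = B (0 - 1) ∪ (B 0 \ A₁))
    (hC1 : C 1 = A₁ ∪ B 1)
    (hCi : ∀ i : Fin k, 2 ≤ (i : ℕ) → C i = B (i - 1) ∪ B i) :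
    ∃ D : Fin k → Set α, (∀ i, M.Indep (D i) ∧ D i ⊆ C i) ∧
      (⋃ i, D i) = ⋃ i, B i := by
  obtain ⟨T, hT0, hTB, hbase⟩ := Matroid.exists_cyclic_exchange (M := M) hB hdisj hA₁
  refine ⟨fun i ↦ T (i - 1) ∪ (B i \ T i), fun i ↦ ⟨(hbase i).indep, ?_⟩,
    iUnion_sub_union_sdiff hTB 1⟩
  dsimp only
  by_cases h0 : i = 0
  · subst h0
    rw [hC0, hT0]
    exact union_subset_union_left _ (hTB _)
  by_cases h1 : i = 1
  · subst h1
    rw [hC1, sub_self, hT0]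
    exact union_subset_union_right _ sdiff_subset
  have h2 : 2 ≤ (i : ℕ) := by
    have h0' : (i : ℕ) ≠ 0 := fun h ↦ h0 (Fin.ext h)
    have h1' : (i : ℕ) ≠ 1 := fun h ↦
      h1 (Fin.ext (by rw [h, Fin.val_one', Nat.mod_eq_of_lt (h ▸ i.isLt)]))
    omega
  rw [hCi i h2]
  exact union_subset_union (hTB _) sdiff_subset

/-- Let `B 0, …, B (k-1)` (`k ≥ 2`) be pairwise disjoint bases of a finite matroid `M`,
and `A₁ ⊆ B 0`.  With `C 0 = B (k-1) ∪ (B 0 \ A₁)`, `C 1 = A₁ ∪ B 1`, and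
`C i = B (i-1) ∪ B i` for `i ≥ 2`, there exist sets `D 0, …, D (k-1)`, each `D i`
independent in `M` and contained in `C i`, with `D 0 ∪ ⋯ ∪ D (k-1) = B 0 ∪ ⋯ ∪ B (k-1)`. -/
theorem exists_independent_partition {α : Type*} {k : ℕ} [NeZero k] (hk : 2 ≤ k)
    (M : Matroid α) (hM : M.Finite)
    (B : Fin k → Set α) (hB : ∀ i, M.IsBase (B i))
    (hdisj : ∀ i j : Fin k, i ≠ j → Disjoint (B i) (B j))
    (A₁ : Set α) (hA₁ : A₁ ⊆ B 0)
    (C : Fin k → Set α)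
    (hC0 : C 0 = B (0 - 1) ∪ (B 0 \ A₁))
    (hC1 : C 1 = A₁ ∪ B 1)
    (hCi : ∀ i : Fin k, 2 ≤ (i : ℕ) → C i = B (i - 1) ∪ B i) :
    ∃ D : Fin k → Set α, (∀ i, M.Indep (D i) ∧ D i ⊆ C i) ∧
      (⋃ i, D i) = ⋃ i, B i :=
  exists_independent_partition_general M hM B hB hdisj A₁ hA₁ C hC0 hC1 hCi
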